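/- arXiv:0912.4035 — 10 statements merged into one kernel-verified Lean document; each statement's English description precedes it below -/
import Mathlib

section
/- Let G be a finite rectangular digraph. Then R⁻ is an equivalence relation on the set of vertices of G that are not sources. -/
/-- A digraph (on vertex type `V`, with edge relation `E`) is rectangular if
whenever `(x,y)`, `(x',y)`, `(x',y')` are edges, so is `(x,y')`. -/
def Rectangular {V : Type*} (E : V → V → Prop) : Prop :=
  ∀ x x' y y' : V, E x y → E x' y → E x' y' → E x y'

/-- `x R⁺ y` iff there is a common out-neighbour `z` with edges `(x,z)` and `(y,z)`. -/
def Rplus {V : Type*} (E : V → V → Prop) (x y : V) : Prop := ∃ z, E x z ∧ E y z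

/-- `x R⁻ y` iff there is a common in-neighbour `z` with edges `(z,x)` and `(z,y)`. -/
def Rminus {V : Type*} (E : V → V → Prop) (x y : V) : Prop := ∃ z, E z x ∧ E z y

/-- `m` is a Maltsev polymorphism of the digraph with edge relation `E`:
a ternary polymorphism with `m x y y = x` and `m x x y = y`. -/
def IsMaltsev {V : Type*} (E : V → V → Prop) (m : V → V → V → V) : Prop :=
  (∀ x x' y y' z z' : V, E x x' → E y y' → E z z' → E (m x y z) (m x' y' z')) ∧
  (∀ x y : V, m x y y = x) ∧ (∀ x y : V, m x x y = y)

/-- `M` is a majority polymorphism of the digraph with edge relation `E`: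
a ternary polymorphism with `M x y y = M y x y = M y y x = y`. -/
def IsMajority {V : Type*} (E : V → V → Prop) (M : V → V → V → V) : Prop :=
  (∀ x x' y y' z z' : V, E x x' → E y y' → E z z' → E (M x y z) (M x' y' z')) ∧
  (∀ x y : V, M x y y = y) ∧ (∀ x y : V, M y x y = y) ∧ (∀ x y : V, M y y x = y)

/-- `X` is an equivalence class of `R⁺` (on the non-sink vertices):
the class `{y | x R⁺ y}` of some non-sink vertex `x`. -/
def IsRplusClass {V : Type*} (E : V → V → Prop) (X : Set V) : Prop :=
  ∃ x : V, (∃ u, E x u) ∧ X = {y | Rplus E x y}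

/-- `X` is an equivalence class of `R⁻` (on the non-source vertices):
the class `{y | x R⁻ y}` of some non-source vertex `x`. -/
def IsRminusClass {V : Type*} (E : V → V → Prop) (X : Set V) : Prop :=
  ∃ x : V, (∃ u, E u x) ∧ X = {y | Rminus E x y}

/-- `X⁺`: the union of the out-neighbourhoods of vertices of `X`. -/
def plusSet {V : Type*} (E : V → V → Prop) (X : Set V) : Set V := {u | ∃ v ∈ X, E v u}

/-- `X⁻`: the union of the in-neighbourhoods of vertices of `X`. -/
def minusSet {V : Type*} (E : V → V → Prop) (X : Set V) : Set V := {u | ∃ v ∈ X, E u v}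

/-- in a finite rectangular digraph, `R⁻` is an equivalence relation
on the set of non-source vertices. -/
theorem Rminus_equivalence_on_nonsources {V : Type*} [Fintype V] (E : V → V → Prop)
    (hrect : Rectangular E) :
    Equivalence (fun a b : {v : V // ∃ u, E u v} => Rminus E a.val b.val) := by
  constructor
  · rintro ⟨a, u, hu⟩; exact ⟨u, hu, hu⟩
  · rintro a b ⟨z, h1, h2⟩; exact ⟨z, h2, h1⟩
  · rintro a b c ⟨z, hza, hzb⟩ ⟨w, hwb, hwc⟩
    exact ⟨z, hza, hrect z w b c.val hzb hwb hwc⟩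
end

section
/- Let G be a finite rectangular digraph. Whenever x R⁺ y, the out-neighborhoods coincide: x⁺ = y⁺. Moreover, for any vertex x that is not a sink, the set x⁺ is an equivalence class of the relation R⁻: all vertices of x⁺ are pairwise R⁻-related, and any vertex R⁻-related to a vertex of x⁺ belongs to x⁺. -/
/-- in a finite rectangular digraph, `x R⁺ y` implies `x⁺ = y⁺`, and for
any non-sink `x` the set `x⁺` is an equivalence class of `R⁻`: its vertices are pairwise
`R⁻`-related, and anything `R⁻`-related to a vertex of `x⁺` lies in `x⁺`. -/
theorem Rplus_out_neighbourhoods {V : Type*} [Fintype V] (E : V → V → Prop)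
    (hrect : Rectangular E) :
    (∀ x y : V, Rplus E x y → {u | E x u} = {u | E y u}) ∧
    (∀ x : V, (∃ u, E x u) →
      (∀ u ∈ {u | E x u}, ∀ v ∈ {u | E x u}, Rminus E u v) ∧
      (∀ u ∈ {u | E x u}, ∀ v : V, Rminus E v u → v ∈ {u | E x u})) := by
  constructor
  · rintro x y ⟨z, hxz, hyz⟩
    ext u
    constructor
    · intro hxu; exact hrect y x z u hyz hxz hxu
    · intro hyu; exact hrect x y z u hxz hyz hyu
  · intro x _
    constructor
    · intro u hu v hv; exact ⟨x, hu, hv⟩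
    · rintro u hu v ⟨z, hzv, hzu⟩; exact hrect x z u v hu hzu hzv
end

section
/- Let G be a finite rectangular digraph. If X is an equivalence class of R⁺ (on the non-sink vertices), then (X⁺)⁻ = X, where X⁺ = ⋃_{v∈X} v⁺ and Y⁻ = ⋃_{v∈Y} v⁻. Dually, if Y is an equivalence class of R⁻ (on the non-source vertices), then (Y⁻)⁺ = Y. -/
/-- in a finite rectangular digraph, `(X⁺)⁻ = X` for any `R⁺`-equivalence
class `X`, and dually `(Y⁻)⁺ = Y` for any `R⁻`-equivalence class `Y`. -/
theorem class_plus_minus_identity {V : Type*} [Fintype V] (E : V → V → Prop)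
    (hrect : Rectangular E) :
    (∀ X : Set V, IsRplusClass E X → minusSet E (plusSet E X) = X) ∧
    (∀ Y : Set V, IsRminusClass E Y → plusSet E (minusSet E Y) = Y) := by
  constructor
  · rintro X ⟨x, ⟨u, hxu⟩, rfl⟩
    ext w
    constructor
    · rintro ⟨z, ⟨v, ⟨t, hxt, hvt⟩, hvz⟩, hwz⟩
      exact ⟨z, hrect x v t z hxt hvt hvz, hwz⟩
    · rintro ⟨z, hxz, hwz⟩
      exact ⟨z, ⟨w, ⟨z, hxz, hwz⟩, hwz⟩, hwz⟩
  · rintro Y ⟨x, ⟨u, hux⟩, rfl⟩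
    ext w
    constructor
    · rintro ⟨z, ⟨v, ⟨t, htx, htv⟩, hzv⟩, hzw⟩
      exact ⟨z, hrect z t v x hzv htv htx, hzw⟩
    · rintro ⟨z, hzx, hzw⟩
      exact ⟨z, ⟨w, ⟨z, hzx, hzw⟩, hzw⟩, hzw⟩
end

section
/- Let G be a finite rectangular digraph. Then the mapping φ : X ↦ X⁺ is a bijection from the set of equivalence classes of R⁺ (on the non-sink vertices) to the set of equivalence classes of R⁻ (on the non-source vertices). -/
/-- in a finite rectangular digraph, the map `φ : X ↦ X⁺` is a bijection
from the set of `R⁺`-equivalence classes onto the set of `R⁻`-equivalence classes. -/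
theorem phi_bijection_of_classes {V : Type*} [Fintype V] (E : V → V → Prop)
    (hrect : Rectangular E) :
    Set.BijOn (plusSet E) {X : Set V | IsRplusClass E X} {Y : Set V | IsRminusClass E Y} := by
  have key : ∀ x u : V, E x u → plusSet E {y | Rplus E x y} = {y | Rminus E u y} := by
    intro x u hxu
    ext y
    constructor
    · rintro ⟨v, ⟨z, hxz, hvz⟩, hvy⟩
      exact ⟨x, hxu, hrect x v z y hxz hvz hvy⟩
    · rintro ⟨w, hwu, hwy⟩
      exact ⟨x, ⟨u, hxu, hxu⟩, hrect x w u y hxu hwu hwy⟩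
  refine ⟨?_, ?_, ?_⟩
  · rintro X ⟨x, ⟨u, hxu⟩, rfl⟩
    exact ⟨u, ⟨x, hxu⟩, key x u hxu⟩
  · rintro X ⟨x, ⟨u, hxu⟩, rfl⟩ X' ⟨x', ⟨u', hx'u'⟩, rfl⟩ heq
    rw [key x u hxu, key x' u' hx'u'] at heq
    have h1 : Rminus E u u := ⟨x, hxu, hxu⟩
    have h2 : Rminus E u' u := by have := Set.ext_iff.mp heq u; exact this.mp h1
    obtain ⟨w, hwu', hwu⟩ := h2
    have hx'u : E x' u := hrect x' w u' u hx'u' hwu' hwu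
    ext y
    constructor
    · rintro ⟨z, hxz, hyz⟩
      exact ⟨z, hrect x' x u z hx'u hxu hxz, hyz⟩
    · rintro ⟨z, hx'z, hyz⟩
      exact ⟨z, hrect x x' u z hxu hx'u hx'z, hyz⟩
  · rintro Y ⟨u, ⟨z, hzu⟩, rfl⟩
    exact ⟨{y | Rplus E z y}, ⟨z, ⟨u, hzu⟩, rfl⟩, key z u hzu⟩
end

section
/- Let G be a finite rectangular digraph. Let G⁺ be the digraph whose vertices are the equivalence classes of R⁺ (on the non-sink vertices of G), with an edge (X,Y) iff there exist x ∈ X, y ∈ Y with (x,y) ∈ E(G); and let G⁻ be the digraph whose vertices are the equivalence classes of R⁻ (on the non-source vertices), with an edge (X,Y) iff there exist x ∈ X, y ∈ Y with (x,y) ∈ E(G). Then the bijection φ : X ↦ X⁺ from R⁺-classes to R⁻-classes is an isomorphism from G⁺ to G⁻: (X,Y) ∈ E(G⁺) if and only if (φ(X),φ(Y)) ∈ E(G⁻). -/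
lemma plusSet_class {V : Type*} (E : V → V → Prop) (hrect : Rectangular E)
    {x u : V} (hxu : E x u) :
    plusSet E {y | Rplus E x y} = {w | E x w} := by
  ext w
  simp only [plusSet, Rplus, Set.mem_setOf_eq]
  constructor
  · rintro ⟨v, ⟨z, hxz, hvz⟩, hvw⟩
    exact hrect x v z w hxz hvz hvw
  · intro hxw
    exact ⟨x, ⟨u, hxu, hxu⟩, hxw⟩

/-- in a finite rectangular digraph, the bijection `φ : X ↦ X⁺` from
`R⁺`-classes to `R⁻`-classes is an isomorphism from `G⁺` to `G⁻`: it is a bijection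
and `(X,Y) ∈ E(G⁺)` iff `(φ X, φ Y) ∈ E(G⁻)`. -/
theorem phi_isomorphism {V : Type*} [Fintype V] (E : V → V → Prop)
    (hrect : Rectangular E) :
    Set.BijOn (plusSet E) {X : Set V | IsRplusClass E X} {Y : Set V | IsRminusClass E Y} ∧
    (∀ X Y : Set V, IsRplusClass E X → IsRplusClass E Y →
      ((∃ x ∈ X, ∃ y ∈ Y, E x y) ↔
        (∃ x ∈ plusSet E X, ∃ y ∈ plusSet E Y, E x y))) := by
  constructor
  · refine ⟨?_, ?_, ?_⟩
    · rintro X ⟨x, ⟨u, hxu⟩, rfl⟩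
      rw [plusSet_class E hrect hxu]
      refine ⟨u, ⟨x, hxu⟩, ?_⟩
      ext w
      simp only [Rminus, Set.mem_setOf_eq]
      constructor
      · intro hxw
        exact ⟨x, hxu, hxw⟩
      · rintro ⟨z, hzu, hzw⟩
        exact hrect x z u w hxu hzu hzw
    · rintro X ⟨x, ⟨u, hxu⟩, rfl⟩ Y ⟨x', ⟨u', hxu'⟩, rfl⟩ heq
      rw [plusSet_class E hrect hxu, plusSet_class E hrect hxu'] at heq
      have hxu2 : E x' u := (Set.ext_iff.mp heq u).mp hxu
      ext w
      simp only [Rplus, Set.mem_setOf_eq]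
      constructor
      · rintro ⟨z, hxz, hwz⟩
        exact ⟨z, hrect x' x u z hxu2 hxu hxz, hwz⟩
      · rintro ⟨z, hxz, hwz⟩
        exact ⟨z, hrect x x' u z hxu hxu2 hxz, hwz⟩
    · rintro Y ⟨y, ⟨u, huy⟩, rfl⟩
      refine ⟨{z | Rplus E u z}, ⟨u, ⟨y, huy⟩, rfl⟩, ?_⟩
      rw [plusSet_class E hrect huy]
      ext w
      simp only [Rminus, Set.mem_setOf_eq]
      constructor
      · intro huw
        exact ⟨u, huy, huw⟩
      · rintro ⟨z, hzy, hzw⟩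
        exact hrect u z y w huy hzy hzw
  · rintro X Y ⟨x, ⟨u, hxu⟩, rfl⟩ ⟨y, ⟨u', hyu'⟩, rfl⟩
    constructor
    · rintro ⟨a, ⟨s, hxs, has⟩, b, ⟨t, hyt, hbt⟩, hab⟩
      refine ⟨b, ⟨x, ⟨u, hxu, hxu⟩, hrect x a s b hxs has hab⟩,
        t, ⟨y, ⟨u', hyu', hyu'⟩, hyt⟩, hbt⟩
    · rintro ⟨a, ⟨v, ⟨s, hxs, hvs⟩, hva⟩, b, ⟨w, ⟨t, hyt, hwt⟩, hwb⟩, hab⟩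
      have hxa : E x a := hrect x v s a hxs hvs hva
      have hyb : E y b := hrect y w t b hyt hwt hwb
      exact ⟨x, ⟨u, hxu, hxu⟩, a, ⟨b, hyb, hab⟩, hxa⟩
end

section
/- Let G be a finite digraph admitting a Maltsev polymorphism, and let G⁺ be the digraph whose vertices are the equivalence classes of R⁺ (on the non-sink vertices of G), with an edge (X,Y) iff there exist x ∈ X, y ∈ Y with (x,y) ∈ E(G). Then G⁺ also admits a Maltsev polymorphism. -/
/-- if a finite digraph `G` admits a Maltsev polymorphism then so does the
digraph `G⁺` on the `R⁺`-equivalence classes, with an edge `(X,Y)` iff some `x ∈ X`,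
`y ∈ Y` satisfy `(x,y) ∈ E(G)`. -/
theorem Gplus_is_maltsev {V : Type*} [Fintype V] (E : V → V → Prop)
    (hm : ∃ m : V → V → V → V, IsMaltsev E m) :
    ∃ t : {X : Set V // IsRplusClass E X} → {X : Set V // IsRplusClass E X} →
          {X : Set V // IsRplusClass E X} → {X : Set V // IsRplusClass E X},
      IsMaltsev (fun X Y : {X : Set V // IsRplusClass E X} =>
        ∃ x ∈ X.val, ∃ y ∈ Y.val, E x y) t := by
  classical
  obtain ⟨m, hpoly, hm1, hm2⟩ := hm
  have rep : ∀ X : {X : Set V // IsRplusClass E X},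
      ∃ x : V, (∃ u, E x u) ∧ X.val = {y | Rplus E x y} := fun X => X.2
  choose r hr hset using rep
  refine ⟨fun X Y Z => ⟨{y | Rplus E (m (r X) (r Y) (r Z)) y},
    m (r X) (r Y) (r Z), ?_, rfl⟩, ?_, ?_, ?_⟩
  · obtain ⟨u, hu⟩ := hr X
    obtain ⟨v, hv⟩ := hr Y
    obtain ⟨w, hw⟩ := hr Z
    exact ⟨m u v w, hpoly _ _ _ _ _ _ hu hv hw⟩
  · rintro X X' Y Y' Z Z' ⟨x, hx, x', hx', hxx'⟩ ⟨y, hy, y', hy', hyy'⟩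
      ⟨z, hz, z', hz', hzz'⟩
    rw [hset X] at hx; rw [hset Y] at hy; rw [hset Z] at hz
    rw [hset X'] at hx'; rw [hset Y'] at hy'; rw [hset Z'] at hz'
    obtain ⟨u, hru, hxu⟩ := hx
    obtain ⟨v, hrv, hyv⟩ := hy
    obtain ⟨w, hrw, hzw⟩ := hz
    obtain ⟨u', hru', hxu'⟩ := hx'
    obtain ⟨v', hrv', hyv'⟩ := hy'
    obtain ⟨w', hrw', hzw'⟩ := hz'
    refine ⟨m x y z, ⟨m u v w, hpoly _ _ _ _ _ _ hru hrv hrw,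
        hpoly _ _ _ _ _ _ hxu hyv hzw⟩,
      m x' y' z', ⟨m u' v' w', hpoly _ _ _ _ _ _ hru' hrv' hrw',
        hpoly _ _ _ _ _ _ hxu' hyv' hzw'⟩,
      hpoly _ _ _ _ _ _ hxx' hyy' hzz'⟩
  · intro X Y
    apply Subtype.ext
    show {y | Rplus E (m (r X) (r Y) (r Y)) y} = X.val
    rw [hm1, ← hset X]
  · intro X Y
    apply Subtype.ext
    show {y | Rplus E (m (r X) (r X) (r Y)) y} = Y.val
    rw [hm2, ← hset Y]
end

section
/- Every finite digraph that admits a Maltsev polymorphism also admits a majority polymorphism. -/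
/- ------------------------------------------------------------------
   Auxiliary development for the proof (own lemmas).
   ------------------------------------------------------------------ -/

section MaltsevMajority

open scoped Classical

universe u

variable {V : Type u} (E : V → V → Prop)

lemma maltsev_rect {m : V → V → V → V} (h : IsMaltsev E m) : Rectangular E := by
  intro x x' y y' hxy hx'y hx'y'
  have h2 := h.1 x y x' y x' y' hxy hx'y hx'y'
  rwa [h.2.1, h.2.2] at h2

lemma rplus_symm {a b : V} (h : Rplus E a b) : Rplus E b a := by
  obtain ⟨z, h1, h2⟩ := h; exact ⟨z, h2, h1⟩

lemma rplus_trans (hr : Rectangular E) {a b c : V} (h1 : Rplus E a b) (h2 : Rplus E b c) :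
    Rplus E a c := by
  obtain ⟨z, haz, hbz⟩ := h1; obtain ⟨w, hbw, hcw⟩ := h2
  exact ⟨w, hr a b z w haz hbz hbw, hcw⟩

/-- out-neighbourhoods are constant on `R⁺`-classes. -/
lemma outc (hr : Rectangular E) {a b y : V} (hab : Rplus E a b) (h : E a y) : E b y := by
  obtain ⟨z, haz, hbz⟩ := hab
  exact hr b a z y hbz haz h

lemma rplus_m {m : V → V → V → V} (hml : IsMaltsev E m) {a a' b b' c c' : V}
    (ha : Rplus E a a') (hb : Rplus E b b') (hc : Rplus E c c') :
    Rplus E (m a b c) (m a' b' c') := by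
  obtain ⟨x, ha1, ha2⟩ := ha; obtain ⟨y, hb1, hb2⟩ := hb; obtain ⟨z, hc1, hc2⟩ := hc
  exact ⟨m x y z, hml.1 _ _ _ _ _ _ ha1 hb1 hc1, hml.1 _ _ _ _ _ _ ha2 hb2 hc2⟩

/-- Setoid of `R⁺` on non-sink vertices. -/
def nsSetoid (hr : Rectangular E) : Setoid {x : V // ∃ y, E x y} where
  r a b := Rplus E a.1 b.1
  iseqv := ⟨fun a => ⟨a.2.choose, a.2.choose_spec, a.2.choose_spec⟩,
            fun h => rplus_symm E h, fun h1 h2 => rplus_trans E hr h1 h2⟩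

/-- The quotient digraph. -/
def Edag (hr : Rectangular E) :
    Quotient (nsSetoid E hr) → Quotient (nsSetoid E hr) → Prop :=
  fun X Y => ∃ a b : {x : V // ∃ y, E x y},
    Quotient.mk (nsSetoid E hr) a = X ∧ Quotient.mk (nsSetoid E hr) b = Y ∧ E a.1 b.1

/-- Maltsev operation on non-sinks. -/
def mNS {m : V → V → V → V} (hml : IsMaltsev E m) :
    {x : V // ∃ y, E x y} → {x : V // ∃ y, E x y} → {x : V // ∃ y, E x y} →
    {x : V // ∃ y, E x y} :=
  fun a b c => ⟨m a.1 b.1 c.1, by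
    obtain ⟨x, hx⟩ := a.2; obtain ⟨y, hy⟩ := b.2; obtain ⟨z, hz⟩ := c.2
    exact ⟨m x y z, hml.1 _ _ _ _ _ _ hx hy hz⟩⟩

/-- Maltsev operation on the quotient via canonical representatives. -/
noncomputable def mdag (hr : Rectangular E) {m : V → V → V → V} (hml : IsMaltsev E m) :
    Quotient (nsSetoid E hr) → Quotient (nsSetoid E hr) → Quotient (nsSetoid E hr) →
    Quotient (nsSetoid E hr) :=
  fun X Y Z => Quotient.mk (nsSetoid E hr) (mNS E hml X.out Y.out Z.out)

lemma qexact (hr : Rectangular E) {a : {x : V // ∃ y, E x y}} {C : Quotient (nsSetoid E hr)}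
    (h : Quotient.mk (nsSetoid E hr) a = C) : Rplus E a.1 C.out.1 := by
  have h2 : Quotient.mk (nsSetoid E hr) a = Quotient.mk (nsSetoid E hr) C.out := by
    rw [h, Quotient.out_eq]
  exact Quotient.exact h2

lemma mdag_maltsev (hr : Rectangular E) {m : V → V → V → V} (hml : IsMaltsev E m) :
    IsMaltsev (Edag E hr) (mdag E hr hml) := by
  refine ⟨?_, ?_, ?_⟩
  · rintro X X' Y Y' Z Z' ⟨a, a', ha, ha', ea⟩ ⟨b, b', hb, hb', eb⟩ ⟨c, c', hc, hc', ec⟩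
    have ea2 : E X.out.1 a'.1 := outc E hr (qexact E hr ha) ea
    have eb2 : E Y.out.1 b'.1 := outc E hr (qexact E hr hb) eb
    have ec2 : E Z.out.1 c'.1 := outc E hr (qexact E hr hc) ec
    refine ⟨mNS E hml X.out Y.out Z.out, mNS E hml a' b' c', rfl, ?_,
      hml.1 _ _ _ _ _ _ ea2 eb2 ec2⟩
    exact Quotient.sound (rplus_m E hml (qexact E hr ha') (qexact E hr hb') (qexact E hr hc'))
  · intro X Y
    show Quotient.mk (nsSetoid E hr) (mNS E hml X.out Y.out Y.out) = X
    have h : mNS E hml X.out Y.out Y.out = X.out := Subtype.ext (hml.2.1 _ _)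
    rw [h, Quotient.out_eq]
  · intro X Y
    show Quotient.mk (nsSetoid E hr) (mNS E hml X.out X.out Y.out) = Y
    have h : mNS E hml X.out X.out Y.out = Y.out := Subtype.ext (hml.2.2 _ _)
    rw [h, Quotient.out_eq]

/- ---------------- Lifting a majority from the quotient ---------------- -/

/-- Class of a non-sink vertex. -/
def clsQ (hr : Rectangular E) (u : V) (h : ∃ z, E u z) : Quotient (nsSetoid E hr) :=
  Quotient.mk (nsSetoid E hr) ⟨u, h⟩

/-- Class of the in-neighbours of a non-source vertex. -/
noncomputable def betaQ (hr : Rectangular E) (u : V) (h : ∃ p, E p u) :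
    Quotient (nsSetoid E hr) :=
  Quotient.mk (nsSetoid E hr) ⟨h.choose, ⟨u, h.choose_spec⟩⟩

/-- `y` lies in the common out-neighbourhood of class `C`. -/
noncomputable def Fset (hr : Rectangular E) (C : Quotient (nsSetoid E hr)) (y : V) : Prop :=
  E C.out.1 y

/-- `y` is a member of the class `C`. -/
def memQ (hr : Rectangular E) (C : Quotient (nsSetoid E hr)) (y : V) : Prop :=
  ∃ h : (∃ z, E y z), Quotient.mk (nsSetoid E hr) ⟨y, h⟩ = C

lemma memF (hr : Rectangular E) {a : {x : V // ∃ y, E x y}} {C : Quotient (nsSetoid E hr)}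
    {y : V} (h : Quotient.mk (nsSetoid E hr) a = C) (e : E a.1 y) : Fset E hr C y :=
  outc E hr (qexact E hr h) e

lemma memQ_out (hr : Rectangular E) (C : Quotient (nsSetoid E hr)) :
    memQ E hr C C.out.1 :=
  ⟨C.out.2, Quotient.out_eq C⟩

lemma gammaF_ne (hr : Rectangular E) (C D : Quotient (nsSetoid E hr))
    (h : Edag E hr C D) : ∃ y, memQ E hr D y ∧ Fset E hr C y := by
  obtain ⟨a, b, ha, hb, e⟩ := h
  exact ⟨b.1, ⟨b.2, hb⟩, memF E hr ha e⟩

lemma Ebetacls (hr : Rectangular E) (u : V) (hs : ∃ z, E u z) (hp2 : ∃ p, E p u) :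
    Edag E hr (betaQ E hr u hp2) (clsQ E hr u hs) :=
  ⟨⟨hp2.choose, ⟨u, hp2.choose_spec⟩⟩, ⟨u, hs⟩, rfl, rfl, hp2.choose_spec⟩

lemma betaeq (hr : Rectangular E) {u u' : V} (e : E u u') (h' : ∃ p, E p u')
    (hu : ∃ z, E u z) : betaQ E hr u' h' = clsQ E hr u hu :=
  Quotient.sound ⟨u', h'.choose_spec, e⟩

variable (hr : Rectangular E)
variable (Md : Quotient (nsSetoid E hr) → Quotient (nsSetoid E hr) →
  Quotient (nsSetoid E hr) → Quotient (nsSetoid E hr))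

/-- The generic value of the lifted majority. -/
noncomputable def pickD (hMd : IsMajority (Edag E hr) Md) : V → V → V → V :=
  fun u v w =>
    if h1 : (∃ z, E u z) ∧ (∃ z, E v z) ∧ (∃ z, E w z) then
      if h2 : (∃ p, E p u) ∧ (∃ p, E p v) ∧ (∃ p, E p w) then
        (gammaF_ne E hr (Md (betaQ E hr u h2.1) (betaQ E hr v h2.2.1) (betaQ E hr w h2.2.2))
               (Md (clsQ E hr u h1.1) (clsQ E hr v h1.2.1) (clsQ E hr w h1.2.2))
               (hMd.1 _ _ _ _ _ _ (Ebetacls E hr u h1.1 h2.1)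
                 (Ebetacls E hr v h1.2.1 h2.2.1) (Ebetacls E hr w h1.2.2 h2.2.2))).choose
      else (Md (clsQ E hr u h1.1) (clsQ E hr v h1.2.1) (clsQ E hr w h1.2.2)).out.1
    else if h2 : (∃ p, E p u) ∧ (∃ p, E p v) ∧ (∃ p, E p w) then
      (Md (betaQ E hr u h2.1) (betaQ E hr v h2.2.1) (betaQ E hr w h2.2.2)).out.2.choose
    else u

/-- The lifted majority candidate. -/
noncomputable def Mlift (hMd : IsMajority (Edag E hr) Md) : V → V → V → V :=
  fun u v w =>
    if v = w then v else if u = v then u else if u = w then u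
    else pickD E hr Md hMd u v w

lemma Mlift_mem (hMd : IsMajority (Edag E hr) Md) (u v w : V)
    (hu : ∃ z, E u z) (hv : ∃ z, E v z) (hw : ∃ z, E w z) :
    memQ E hr (Md (clsQ E hr u hu) (clsQ E hr v hv) (clsQ E hr w hw))
      (Mlift E hr Md hMd u v w) := by
  unfold Mlift
  by_cases hvw : v = w
  · rw [if_pos hvw]
    subst hvw
    show memQ E hr (Md (clsQ E hr u hu) (clsQ E hr v hv) (clsQ E hr v hv)) v
    rw [hMd.2.1]
    exact ⟨hv, rfl⟩
  · rw [if_neg hvw]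
    by_cases huv : u = v
    · rw [if_pos huv]
      subst huv
      show memQ E hr (Md (clsQ E hr u hu) (clsQ E hr u hu) (clsQ E hr w hw)) u
      rw [hMd.2.2.2]
      exact ⟨hu, rfl⟩
    · rw [if_neg huv]
      by_cases huw : u = w
      · rw [if_pos huw]
        subst huw
        show memQ E hr (Md (clsQ E hr u hu) (clsQ E hr v hv) (clsQ E hr u hu)) u
        rw [hMd.2.2.1]
        exact ⟨hu, rfl⟩
      · rw [if_neg huw]
        unfold pickD
        rw [dif_pos ⟨hu, hv, hw⟩]
        by_cases h2 : (∃ p, E p u) ∧ (∃ p, E p v) ∧ (∃ p, E p w)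
        · rw [dif_pos h2]
          exact (gammaF_ne E hr _ _
            (hMd.1 _ _ _ _ _ _ (Ebetacls E hr u hu h2.1)
              (Ebetacls E hr v hv h2.2.1) (Ebetacls E hr w hw h2.2.2))).choose_spec.1
        · rw [dif_neg h2]
          exact memQ_out E hr _

lemma Mlift_F (hMd : IsMajority (Edag E hr) Md) (u v w : V)
    (hu : ∃ p, E p u) (hv : ∃ p, E p v) (hw : ∃ p, E p w) :
    Fset E hr (Md (betaQ E hr u hu) (betaQ E hr v hv) (betaQ E hr w hw))
      (Mlift E hr Md hMd u v w) := by
  unfold Mlift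
  by_cases hvw : v = w
  · rw [if_pos hvw]
    subst hvw
    show Fset E hr (Md (betaQ E hr u hu) (betaQ E hr v hv) (betaQ E hr v hv)) v
    rw [hMd.2.1]
    exact memF E hr rfl hv.choose_spec
  · rw [if_neg hvw]
    by_cases huv : u = v
    · rw [if_pos huv]
      subst huv
      show Fset E hr (Md (betaQ E hr u hu) (betaQ E hr u hu) (betaQ E hr w hw)) u
      rw [hMd.2.2.2]
      exact memF E hr rfl hu.choose_spec
    · rw [if_neg huv]
      by_cases huw : u = w
      · rw [if_pos huw]
        subst huw
        show Fset E hr (Md (betaQ E hr u hu) (betaQ E hr v hv) (betaQ E hr u hu)) u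
        rw [hMd.2.2.1]
        exact memF E hr rfl hu.choose_spec
      · rw [if_neg huw]
        unfold pickD
        by_cases h1 : (∃ z, E u z) ∧ (∃ z, E v z) ∧ (∃ z, E w z)
        · rw [dif_pos h1, dif_pos ⟨hu, hv, hw⟩]
          exact (gammaF_ne E hr _ _
            (hMd.1 _ _ _ _ _ _ (Ebetacls E hr u h1.1 hu)
              (Ebetacls E hr v h1.2.1 hv) (Ebetacls E hr w h1.2.2 hw))).choose_spec.2
        · rw [dif_neg h1, dif_pos ⟨hu, hv, hw⟩]
          exact (Md (betaQ E hr u hu) (betaQ E hr v hv) (betaQ E hr w hw)).out.2.choose_spec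

lemma lift_majority (hMd : IsMajority (Edag E hr) Md) :
    ∃ M : V → V → V → V, IsMajority E M := by
  refine ⟨Mlift E hr Md hMd, ?_, ?_, ?_, ?_⟩
  · intro u u' v v' w w' eu ev ew
    have hu : ∃ z, E u z := ⟨u', eu⟩
    have hv : ∃ z, E v z := ⟨v', ev⟩
    have hw : ∃ z, E w z := ⟨w', ew⟩
    have hu' : ∃ p, E p u' := ⟨u, eu⟩
    have hv' : ∃ p, E p v' := ⟨v, ev⟩
    have hw' : ∃ p, E p w' := ⟨w, ew⟩
    have A := Mlift_mem E hr Md hMd u v w hu hv hw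
    have B := Mlift_F E hr Md hMd u' v' w' hu' hv' hw'
    rw [betaeq E hr eu hu' hu, betaeq E hr ev hv' hv, betaeq E hr ew hw' hw] at B
    obtain ⟨hns, hmk⟩ := A
    exact outc E hr (rplus_symm E (qexact E hr hmk)) B
  · intro x y
    unfold Mlift
    rw [if_pos rfl]
  · intro x y
    unfold Mlift
    by_cases h : x = y
    · rw [if_pos h]; exact h
    · rw [if_neg h, if_neg (Ne.symm h), if_pos rfl]
  · intro x y
    unfold Mlift
    by_cases h : y = x
    · rw [if_pos h]
    · rw [if_neg h, if_pos rfl]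

/- ---------------- Base case: permutation digraphs ---------------- -/

lemma perm_case [Finite V]
    (h1 : ∀ x : V, ∃ y, E x y) (h2 : ∀ a b : V, Rplus E a b → a = b) :
    ∃ M : V → V → V → V, IsMajority E M := by
  classical
  let σ : V → V := fun x => (h1 x).choose
  have hσ : ∀ x, E x (σ x) := fun x => (h1 x).choose_spec
  have hinj : Function.Injective σ := by
    intro a b h
    exact h2 a b ⟨σ a, hσ a, by rw [h]; exact hσ b⟩
  have hsurj : Function.Surjective σ := Finite.surjective_of_injective hinj
  have hE : ∀ {x y : V}, E x y → y = σ x := by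
    intro x y e
    obtain ⟨z, hz⟩ := hsurj y
    have hxz : x = z := by
      refine h2 x z ⟨y, e, ?_⟩
      rw [← hz]; exact hσ z
    rw [← hz, hxz]
  refine ⟨fun x y z => if y = z then y else x, ?_, ?_, ?_, ?_⟩
  · intro x x' y y' z z' ex ey ez
    dsimp only
    by_cases h : y = z
    · have h' : y' = z' := by rw [hE ey, hE ez, h]
      rw [if_pos h, if_pos h']; exact ey
    · have h' : y' ≠ z' := by
        intro hc
        exact h (hinj (by rw [← hE ey, ← hE ez, hc]))
      rw [if_neg h, if_neg h']; exact ex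
  · intro x y; dsimp only; rw [if_pos rfl]
  · intro x y
    dsimp only
    by_cases h : x = y
    · rw [if_pos h]; exact h
    · rw [if_neg h]
  · intro x y
    dsimp only
    by_cases h : y = x
    · rw [if_pos h]
    · rw [if_neg h]

end MaltsevMajority

/- ---------------- Main induction ---------------- -/

lemma maltsev_majority_aux : ∀ (n : ℕ) (V : Type u) [Fintype V] (E : V → V → Prop),
    Fintype.card V ≤ n → (∃ m : V → V → V → V, IsMaltsev E m) →
    ∃ M : V → V → V → V, IsMajority E M := by
  intro n
  induction n with
  | zero =>
    intro V _ E hc _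
    have hV : IsEmpty V := Fintype.card_eq_zero_iff.mp (Nat.le_zero.mp hc)
    refine ⟨fun x _ _ => x, ?_, ?_, ?_, ?_⟩ <;> intro x <;> exact (hV.false x).elim
  | succ n ih =>
    intro V _ E hc hm
    obtain ⟨m, hml⟩ := hm
    have hr := maltsev_rect E hml
    by_cases hA : (∀ x : V, ∃ y, E x y) ∧ (∀ a b : V, Rplus E a b → a = b)
    · exact perm_case E hA.1 hA.2
    · classical
      have hcard : Fintype.card (Quotient (nsSetoid E hr)) ≤ n := by
        have hq : Fintype.card (Quotient (nsSetoid E hr)) ≤ Fintype.card {x : V // ∃ y, E x y} :=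
          Fintype.card_le_of_surjective (Quotient.mk (nsSetoid E hr))
            (fun q => ⟨q.out, Quotient.out_eq q⟩)
        rcases not_and_or.mp hA with hs | hnt
        · push_neg at hs
          obtain ⟨x, hx⟩ := hs
          have hlt : Fintype.card {x : V // ∃ y, E x y} < Fintype.card V :=
            Fintype.card_subtype_lt (x := x) (by push_neg; exact hx)
          omega
        · push_neg at hnt
          obtain ⟨a, b, hab, hne⟩ := hnt
          have hsub : Fintype.card {x : V // ∃ y, E x y} ≤ Fintype.card V :=
            Fintype.card_subtype_le _
          have hninj : ¬ Function.Injective (Quotient.mk (nsSetoid E hr)) := by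
            intro hinjq
            obtain ⟨z, haz, hbz⟩ := hab
            have h3 : (⟨a, ⟨z, haz⟩⟩ : {x : V // ∃ y, E x y}) = ⟨b, ⟨z, hbz⟩⟩ :=
              hinjq (Quotient.sound ⟨z, haz, hbz⟩)
            exact hne (congrArg Subtype.val h3)
          have hlt : Fintype.card (Quotient (nsSetoid E hr)) <
              Fintype.card {x : V // ∃ y, E x y} :=
            Fintype.card_lt_of_surjective_not_injective _
              (fun q => ⟨q.out, Quotient.out_eq q⟩) hninj
          omega
      obtain ⟨Md, hMd⟩ := ih (Quotient (nsSetoid E hr)) (Edag E hr) hcard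
        ⟨mdag E hr hml, mdag_maltsev E hr hml⟩
      exact lift_majority E hr Md hMd

/-- main theorem: every finite digraph admitting a Maltsev polymorphism
also admits a majority polymorphism. -/
theorem maltsev_implies_majority {V : Type*} [Fintype V] (E : V → V → Prop)
    (hm : ∃ m : V → V → V → V, IsMaltsev E m) :
    ∃ M : V → V → V → V, IsMajority E M := by
  exact maltsev_majority_aux (Fintype.card V) V E le_rfl hm
end

section
/- Let G be a finite rectangular digraph, and let G⁺ be the digraph whose vertices are the equivalence classes of R⁺ (on the non-sink vertices of G), with an edge (X,Y) iff there exist x ∈ X, y ∈ Y with (x,y) ∈ E(G). Then G admits a Maltsev polymorphism if and only if G⁺ admits a Maltsev polymorphism. -/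
namespace Stmt15

variable {V : Type*} {E : V → V → Prop}

lemma rplus_symm {a b : V} (h : Rplus E a b) : Rplus E b a := by
  obtain ⟨z, h1, h2⟩ := h; exact ⟨z, h2, h1⟩

lemma rect_out (hrect : Rectangular E) {a b u : V} (h : Rplus E a b) (hu : E a u) : E b u := by
  obtain ⟨z, ha, hb⟩ := h
  exact hrect b a z u hb ha hu

lemma rplus_trans (hrect : Rectangular E) {a b c : V} (h1 : Rplus E a b) (h2 : Rplus E b c) :
    Rplus E a c := by
  obtain ⟨z, hb, hc⟩ := h2
  exact ⟨z, rect_out hrect (rplus_symm h1) hb, hc⟩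

lemma rplus_refl {a : V} (h : ∃ u, E a u) : Rplus E a a := by
  obtain ⟨u, hu⟩ := h; exact ⟨u, hu, hu⟩

/-- The `R⁺` class of a non-sink vertex, as an element of the class type. -/
def cls (E : V → V → Prop) (x : V) (hx : ∃ u, E x u) : {X : Set V // IsRplusClass E X} :=
  ⟨{y | Rplus E x y}, x, hx, rfl⟩

lemma self_mem_cls {x : V} (hx : ∃ u, E x u) : x ∈ (cls E x hx).val := rplus_refl hx

lemma cls_eq (hrect : Rectangular E) {x y : V} (hx : ∃ u, E x u) (hy : ∃ u, E y u)
    (h : Rplus E x y) : cls E x hx = cls E y hy := by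
  apply Subtype.ext
  ext z
  exact ⟨fun hz => rplus_trans hrect (rplus_symm h) hz, fun hz => rplus_trans hrect h hz⟩

lemma mem_nonsink {X : {X : Set V // IsRplusClass E X}} {y : V} (h : y ∈ X.val) :
    ∃ u, E y u := by
  obtain ⟨x₀, hx₀, hX⟩ := X.2
  rw [hX] at h
  obtain ⟨z, _, hz⟩ := h
  exact ⟨z, hz⟩

lemma cls_eq_of_mem (hrect : Rectangular E) {X : {X : Set V // IsRplusClass E X}} {y : V}
    (hy : ∃ u, E y u) (h : y ∈ X.val) : cls E y hy = X := by
  obtain ⟨x₀, hx₀, hX⟩ := X.2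
  have : Rplus E x₀ y := by rw [hX] at h; exact h
  refine (cls_eq hrect hx₀ hy this).symm.trans ?_
  exact Subtype.ext hX.symm

lemma class_nonempty (X : {X : Set V // IsRplusClass E X}) : X.val.Nonempty := by
  obtain ⟨x₀, hx₀, hX⟩ := X.2
  exact ⟨x₀, by rw [hX]; exact rplus_refl hx₀⟩

lemma same_out (hrect : Rectangular E) {X : {X : Set V // IsRplusClass E X}} {u v w : V}
    (hu : u ∈ X.val) (hv : v ∈ X.val) (h : E u w) : E v w := by
  obtain ⟨x₀, hx₀, hX⟩ := X.2
  rw [hX] at hu hv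
  have hu' : Rplus E x₀ u := hu
  have hv' : Rplus E x₀ v := hv
  exact rect_out hrect (rplus_trans hrect (rplus_symm hu') hv') h

lemma edge_of_mem_plus (hrect : Rectangular E) {X : {X : Set V // IsRplusClass E X}} {u v : V}
    (hu : u ∈ X.val) (hv : v ∈ plusSet E X.val) : E u v := by
  obtain ⟨s, hs, hsv⟩ := hv
  exact same_out hrect hs hu hsv

lemma plusSet_nonempty (X : {X : Set V // IsRplusClass E X}) : (plusSet E X.val).Nonempty := by
  obtain ⟨x₀, hx₀, hX⟩ := X.2
  obtain ⟨u, hu⟩ := hx₀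
  exact ⟨u, x₀, by rw [hX]; exact rplus_refl ⟨u, hu⟩, hu⟩

/-- The edge relation on `R⁺` classes. -/
def Ed (E : V → V → Prop) (X Y : {X : Set V // IsRplusClass E X}) : Prop :=
  ∃ x ∈ X.val, ∃ y ∈ Y.val, E x y

/-- Forward direction. -/
lemma forward (hrect : Rectangular E) (m : V → V → V → V) (hm : IsMaltsev E m) :
    ∃ t : {X : Set V // IsRplusClass E X} → {X : Set V // IsRplusClass E X} →
          {X : Set V // IsRplusClass E X} → {X : Set V // IsRplusClass E X},
      IsMaltsev (Ed E) t := by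
  obtain ⟨hpoly, hm1, hm2⟩ := hm
  have hrep_ns : ∀ X : {X : Set V // IsRplusClass E X}, ∃ u, E X.2.choose u :=
    fun X => X.2.choose_spec.1
  have hrep_val : ∀ X : {X : Set V // IsRplusClass E X}, X.val = {y | Rplus E X.2.choose y} :=
    fun X => X.2.choose_spec.2
  have hrep_mem : ∀ X : {X : Set V // IsRplusClass E X}, X.2.choose ∈ X.val :=
    fun X => (Set.ext_iff.mp (hrep_val X) _).mpr (rplus_refl (hrep_ns X))
  have hmns : ∀ X Y Z : {X : Set V // IsRplusClass E X},
      ∃ u, E (m X.2.choose Y.2.choose Z.2.choose) u := by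
    intro X Y Z
    obtain ⟨a, ha⟩ := hrep_ns X
    obtain ⟨b, hb⟩ := hrep_ns Y
    obtain ⟨c, hc⟩ := hrep_ns Z
    exact ⟨m a b c, hpoly _ _ _ _ _ _ ha hb hc⟩
  refine ⟨fun X Y Z => cls E (m X.2.choose Y.2.choose Z.2.choose) (hmns X Y Z), ?_, ?_, ?_⟩
  · rintro X X' Y Y' Z Z' ⟨a, haX, a', haX', haa'⟩ ⟨b, hbY, b', hbY', hbb'⟩ ⟨c, hcZ, c', hcZ', hcc'⟩
    have ea : E X.2.choose a' := same_out hrect haX (hrep_mem X) haa'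
    have eb : E Y.2.choose b' := same_out hrect hbY (hrep_mem Y) hbb'
    have ec : E Z.2.choose c' := same_out hrect hcZ (hrep_mem Z) hcc'
    have h1 : Rplus E X'.2.choose a' := (Set.ext_iff.mp (hrep_val X') a').mp haX'
    have h2 : Rplus E Y'.2.choose b' := (Set.ext_iff.mp (hrep_val Y') b').mp hbY'
    have h3 : Rplus E Z'.2.choose c' := (Set.ext_iff.mp (hrep_val Z') c').mp hcZ'
    obtain ⟨p, hp1, hp2⟩ := h1
    obtain ⟨q, hq1, hq2⟩ := h2
    obtain ⟨r, hr1, hr2⟩ := h3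
    refine ⟨m X.2.choose Y.2.choose Z.2.choose, self_mem_cls _, m a' b' c', ?_,
      hpoly _ _ _ _ _ _ ea eb ec⟩
    exact ⟨m p q r, hpoly _ _ _ _ _ _ hp1 hq1 hr1, hpoly _ _ _ _ _ _ hp2 hq2 hr2⟩
  · intro X Y
    refine cls_eq_of_mem hrect _ ?_
    show m X.2.choose Y.2.choose Y.2.choose ∈ X.val
    rw [hm1]
    exact hrep_mem X
  · intro X Y
    refine cls_eq_of_mem hrect _ ?_
    show m X.2.choose X.2.choose Y.2.choose ∈ Y.val
    rw [hm2]
    exact hrep_mem Y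

/-- The `R⁺` class of the in-neighbours of a non-source vertex. -/
noncomputable def icls (E : V → V → Prop) (x : V) (hx : ∃ w, E w x) :
    {X : Set V // IsRplusClass E X} :=
  cls E hx.choose ⟨x, hx.choose_spec⟩

lemma icls_eq (hrect : Rectangular E) {x w : V} (hx : ∃ w', E w' x) (hw : E w x)
    (hwns : ∃ u, E w u) : icls E x hx = cls E w hwns :=
  cls_eq hrect _ _ ⟨x, hx.choose_spec, hw⟩

lemma inter_ne (hrect : Rectangular E) {t : {X : Set V // IsRplusClass E X} →
      {X : Set V // IsRplusClass E X} → {X : Set V // IsRplusClass E X} →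
      {X : Set V // IsRplusClass E X}}
    (ht1 : ∀ X X' Y Y' Z Z', Ed E X X' → Ed E Y Y' → Ed E Z Z' → Ed E (t X Y Z) (t X' Y' Z'))
    {x y z : V} (hx : ∃ u, E x u) (hy : ∃ u, E y u) (hz : ∃ u, E z u)
    (hx' : ∃ w, E w x) (hy' : ∃ w, E w y) (hz' : ∃ w, E w z) :
    ((t (cls E x hx) (cls E y hy) (cls E z hz)).val ∩
      plusSet E (t (icls E x hx') (icls E y hy') (icls E z hz')).val).Nonempty := by
  have ex : Ed E (icls E x hx') (cls E x hx) :=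
    ⟨hx'.choose, self_mem_cls _, x, self_mem_cls hx, hx'.choose_spec⟩
  have ey : Ed E (icls E y hy') (cls E y hy) :=
    ⟨hy'.choose, self_mem_cls _, y, self_mem_cls hy, hy'.choose_spec⟩
  have ez : Ed E (icls E z hz') (cls E z hz) :=
    ⟨hz'.choose, self_mem_cls _, z, self_mem_cls hz, hz'.choose_spec⟩
  obtain ⟨u, hu, v, hv, huv⟩ := ht1 _ _ _ _ _ _ ex ey ez
  exact ⟨v, hv, u, hu, huv⟩

open Classical in
/-- The Maltsev operation on `V` built from one on the classes. -/
noncomputable def mB (hrect : Rectangular E) (t : {X : Set V // IsRplusClass E X} →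
      {X : Set V // IsRplusClass E X} → {X : Set V // IsRplusClass E X} →
      {X : Set V // IsRplusClass E X})
    (ht1 : ∀ X X' Y Y' Z Z', Ed E X X' → Ed E Y Y' → Ed E Z Z' → Ed E (t X Y Z) (t X' Y' Z'))
    (x y z : V) : V :=
  if _h1 : y = z then x
  else if _h2 : x = y then z
  else if h3 : (∃ u, E x u) ∧ (∃ u, E y u) ∧ (∃ u, E z u) then
    if h4 : (∃ w, E w x) ∧ (∃ w, E w y) ∧ (∃ w, E w z) then
      (inter_ne hrect ht1 h3.1 h3.2.1 h3.2.2 h4.1 h4.2.1 h4.2.2).some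
    else (class_nonempty (t (cls E x h3.1) (cls E y h3.2.1) (cls E z h3.2.2))).some
  else if h5 : (∃ w, E w x) ∧ (∃ w, E w y) ∧ (∃ w, E w z) then
    (plusSet_nonempty (t (icls E x h5.1) (icls E y h5.2.1) (icls E z h5.2.2))).some
  else x

lemma mB_mem_src (hrect : Rectangular E) {t : {X : Set V // IsRplusClass E X} →
      {X : Set V // IsRplusClass E X} → {X : Set V // IsRplusClass E X} →
      {X : Set V // IsRplusClass E X}}
    (ht1 : ∀ X X' Y Y' Z Z', Ed E X X' → Ed E Y Y' → Ed E Z Z' → Ed E (t X Y Z) (t X' Y' Z'))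
    (ht2 : ∀ X Y, t X Y Y = X) (ht3 : ∀ X Y, t X X Y = Y)
    {x y z : V} (hx : ∃ u, E x u) (hy : ∃ u, E y u) (hz : ∃ u, E z u) :
    mB hrect t ht1 x y z ∈ (t (cls E x hx) (cls E y hy) (cls E z hz)).val := by
  unfold mB
  split_ifs with h1 h2 h3 h4 h5
  · subst h1
    have e : t (cls E x hx) (cls E y hy) (cls E y hz) = cls E x hx := ht2 _ _
    rw [e]
    exact self_mem_cls hx
  · subst h2
    have e : t (cls E x hx) (cls E x hy) (cls E z hz) = cls E z hz := ht3 _ _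
    rw [e]
    exact self_mem_cls hz
  · exact (inter_ne hrect ht1 h3.1 h3.2.1 h3.2.2 h4.1 h4.2.1 h4.2.2).some_mem.1
  · exact (class_nonempty (t (cls E x h3.1) (cls E y h3.2.1) (cls E z h3.2.2))).some_mem
  · exact absurd ⟨hx, hy, hz⟩ h3
  · exact absurd ⟨hx, hy, hz⟩ h3

lemma mB_mem_tgt (hrect : Rectangular E) {t : {X : Set V // IsRplusClass E X} →
      {X : Set V // IsRplusClass E X} → {X : Set V // IsRplusClass E X} →
      {X : Set V // IsRplusClass E X}}
    (ht1 : ∀ X X' Y Y' Z Z', Ed E X X' → Ed E Y Y' → Ed E Z Z' → Ed E (t X Y Z) (t X' Y' Z'))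
    (ht2 : ∀ X Y, t X Y Y = X) (ht3 : ∀ X Y, t X X Y = Y)
    {a b c x y z : V} (hax : E a x) (hby : E b y) (hcz : E c z) :
    mB hrect t ht1 x y z ∈
      plusSet E (t (cls E a ⟨x, hax⟩) (cls E b ⟨y, hby⟩) (cls E c ⟨z, hcz⟩)).val := by
  unfold mB
  split_ifs with h1 h2 h3 h4 h5
  · subst h1
    have e : cls E c ⟨y, hcz⟩ = cls E b ⟨y, hby⟩ := cls_eq hrect _ _ ⟨y, hcz, hby⟩
    rw [e, ht2]
    exact ⟨a, self_mem_cls _, hax⟩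
  · subst h2
    have e : cls E a ⟨x, hax⟩ = cls E b ⟨x, hby⟩ := cls_eq hrect _ _ ⟨x, hax, hby⟩
    rw [e, ht3]
    exact ⟨c, self_mem_cls _, hcz⟩
  · have hm := (inter_ne hrect ht1 h3.1 h3.2.1 h3.2.2 h4.1 h4.2.1 h4.2.2).some_mem.2
    have e' : plusSet E (t (icls E x h4.1) (icls E y h4.2.1) (icls E z h4.2.2)).val =
        plusSet E (t (cls E a ⟨x, hax⟩) (cls E b ⟨y, hby⟩) (cls E c ⟨z, hcz⟩)).val := by
      rw [icls_eq hrect h4.1 hax ⟨x, hax⟩, icls_eq hrect h4.2.1 hby ⟨y, hby⟩,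
        icls_eq hrect h4.2.2 hcz ⟨z, hcz⟩]
    exact (Set.ext_iff.mp e' _).mp hm
  · exact absurd ⟨⟨a, hax⟩, ⟨b, hby⟩, ⟨c, hcz⟩⟩ h4
  · have hm := (plusSet_nonempty
      (t (icls E x h5.1) (icls E y h5.2.1) (icls E z h5.2.2))).some_mem
    have e' : plusSet E (t (icls E x h5.1) (icls E y h5.2.1) (icls E z h5.2.2)).val =
        plusSet E (t (cls E a ⟨x, hax⟩) (cls E b ⟨y, hby⟩) (cls E c ⟨z, hcz⟩)).val := by
      rw [icls_eq hrect h5.1 hax ⟨x, hax⟩, icls_eq hrect h5.2.1 hby ⟨y, hby⟩,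
        icls_eq hrect h5.2.2 hcz ⟨z, hcz⟩]
    exact (Set.ext_iff.mp e' _).mp hm
  · exact absurd ⟨⟨a, hax⟩, ⟨b, hby⟩, ⟨c, hcz⟩⟩ h5

lemma backward (hrect : Rectangular E) (t : {X : Set V // IsRplusClass E X} →
      {X : Set V // IsRplusClass E X} → {X : Set V // IsRplusClass E X} →
      {X : Set V // IsRplusClass E X})
    (ht : IsMaltsev (Ed E) t) : ∃ m : V → V → V → V, IsMaltsev E m := by
  obtain ⟨ht1, ht2, ht3⟩ := ht
  refine ⟨mB hrect t ht1, ?_, ?_, ?_⟩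
  · intro x x' y y' z z' hxx' hyy' hzz'
    exact edge_of_mem_plus hrect
      (mB_mem_src hrect ht1 ht2 ht3 ⟨x', hxx'⟩ ⟨y', hyy'⟩ ⟨z', hzz'⟩)
      (mB_mem_tgt hrect ht1 ht2 ht3 hxx' hyy' hzz')
  · intro x y
    unfold mB
    rw [dif_pos rfl]
  · intro x y
    by_cases h : x = y
    · subst h
      unfold mB
      rw [dif_pos rfl]
    · unfold mB
      rw [dif_neg h, dif_pos rfl]

end Stmt15

/-- a finite rectangular digraph `G` admits a Maltsev polymorphism iff the
digraph `G⁺` on the `R⁺`-equivalence classes does. -/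
theorem maltsev_iff_Gplus_maltsev {V : Type*} [Fintype V] (E : V → V → Prop)
    (hrect : Rectangular E) :
    (∃ m : V → V → V → V, IsMaltsev E m) ↔
    ∃ t : {X : Set V // IsRplusClass E X} → {X : Set V // IsRplusClass E X} →
          {X : Set V // IsRplusClass E X} → {X : Set V // IsRplusClass E X},
      IsMaltsev (fun X Y : {X : Set V // IsRplusClass E X} =>
        ∃ x ∈ X.val, ∃ y ∈ Y.val, E x y) t := by
  constructor
  · rintro ⟨m, hm⟩
    exact Stmt15.forward hrect m hm
  · rintro ⟨t, ht⟩
    exact Stmt15.backward hrect t ht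
end

section
/- There exists a finite digraph that is rectangular but does not admit a Maltsev polymorphism. -/
/-!
A Maltsev polymorphism `m` forces rectangularity: from edges `(x,y)`, `(x',y)`, `(x',y')`
it yields the edge `(m x x' x', m y y y') = (x,y')`. Polymorphisms also preserve the relation
`E ∘ E` of walks of length two, so every Maltsev digraph has a rectangular square. The oriented
path `0 → 1 → 2 ← 4 ← 3 → 5 → 6` is rectangular, but its square is not: it contains
`0 → 2`, `3 → 2`, `3 → 6` but not `0 → 6`.
-/

open Relation

theorem IsMaltsev.rectangular {V : Type*} {E : V → V → Prop} {m : V → V → V → V}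
    (hm : IsMaltsev E m) : Rectangular E := by
  obtain ⟨hpoly, hxyy, hxxy⟩ := hm
  intro x x' y y' hxy hx'y hx'y'
  simpa only [hxyy, hxxy] using hpoly x y x' y x' y' hxy hx'y hx'y'

theorem IsMaltsev.comp {V : Type*} {E F : V → V → Prop} {m : V → V → V → V}
    (hE : IsMaltsev E m) (hF : IsMaltsev F m) : IsMaltsev (Comp E F) m := by
  refine ⟨?_, hE.2⟩
  rintro x x' y y' z z' ⟨u, hxu, hux'⟩ ⟨v, hyv, hvy'⟩ ⟨w, hzw, hwz'⟩
  exact ⟨m u v w, hE.1 x u y v z w hxu hyv hzw, hF.1 u x' v y' w z' hux' hvy' hwz'⟩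

def zigzagPath (a b : Fin 7) : Prop :=
  (a, b) ∈ ([(0, 1), (1, 2), (3, 4), (4, 2), (3, 5), (5, 6)] : List (Fin 7 × Fin 7))

instance : DecidableRel zigzagPath := fun a b => by
  unfold zigzagPath
  infer_instance

theorem zigzagPath_rectangular : Rectangular zigzagPath := by
  unfold Rectangular
  decide

theorem not_rectangular_comp_zigzagPath : ¬ Rectangular (Comp zigzagPath zigzagPath) := by
  intro h
  obtain ⟨w, h0w, hw6⟩ := h 0 3 2 6 ⟨1, by decide, by decide⟩ ⟨4, by decide, by decide⟩
    ⟨5, by decide, by decide⟩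
  revert w
  decide

/-- there exists a finite digraph that is rectangular but admits no
Maltsev polymorphism. -/
theorem exists_rectangular_not_maltsev :
    ∃ (V : Type) (_ : Fintype V) (E : V → V → Prop),
      Rectangular E ∧ ¬ ∃ m : V → V → V → V, IsMaltsev E m :=
  ⟨Fin 7, inferInstance, zigzagPath, zigzagPath_rectangular, fun ⟨_, hm⟩ =>
    not_rectangular_comp_zigzagPath (hm.comp hm).rectangular⟩
end

section
/- Let G be a finite digraph with a Maltsev polymorphism, let G⁺ be the digraph on the R⁺-equivalence classes (of non-sink vertices) with an edge (X,Y) iff some x ∈ X, y ∈ Y satisfy (x,y) ∈ E(G), and let φ : X ↦ X⁺ be the bijection from R⁺-classes to R⁻-classes. Suppose M⁺ is a majority polymorphism of G⁺, and define M⁻ on R⁻-classes by M⁻(x,y,z) = φ(M⁺(φ⁻¹(x),φ⁻¹(y),φ⁻¹(z))). Then for any vertices x₁, x₂, x₃ of G that are neither sources nor sinks, the sets M⁺(x₁/R⁺, x₂/R⁺, x₃/R⁺) and M⁻(x₁/R⁻, x₂/R⁻, x₃/R⁻) have nonempty intersection. -/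
/-- let `G` be a finite Maltsev digraph, `φ : X ↦ X⁺` the bijection from
`R⁺`-classes to `R⁻`-classes, and `M⁺` a majority polymorphism of `G⁺`; define
`M⁻(x,y,z) = φ (M⁺ (φ⁻¹ x) (φ⁻¹ y) (φ⁻¹ z))`. Then for vertices `x₁, x₂, x₃` that are
neither sources nor sinks, `M⁺(x₁/R⁺, x₂/R⁺, x₃/R⁺) ∩ M⁻(x₁/R⁻, x₂/R⁻, x₃/R⁻) ≠ ∅`. -/
theorem majority_classes_intersect {V : Type*} [Fintype V] (E : V → V → Prop)
    (hm : ∃ m : V → V → V → V, IsMaltsev E m)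
    (φ : {X : Set V // IsRplusClass E X} ≃ {Y : Set V // IsRminusClass E Y})
    (hφ : ∀ X : {X : Set V // IsRplusClass E X}, (φ X).val = plusSet E X.val)
    (Mp : {X : Set V // IsRplusClass E X} → {X : Set V // IsRplusClass E X} →
          {X : Set V // IsRplusClass E X} → {X : Set V // IsRplusClass E X})
    (hMp : IsMajority (fun X Y : {X : Set V // IsRplusClass E X} =>
      ∃ x ∈ X.val, ∃ y ∈ Y.val, E x y) Mp)
    (x₁ x₂ x₃ : V)
    (h₁ : (∃ u, E x₁ u) ∧ (∃ u, E u x₁))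
    (h₂ : (∃ u, E x₂ u) ∧ (∃ u, E u x₂))
    (h₃ : (∃ u, E x₃ u) ∧ (∃ u, E u x₃))
    (X₁ X₂ X₃ : {X : Set V // IsRplusClass E X})
    (hX₁ : x₁ ∈ X₁.val) (hX₂ : x₂ ∈ X₂.val) (hX₃ : x₃ ∈ X₃.val)
    (Y₁ Y₂ Y₃ : {Y : Set V // IsRminusClass E Y})
    (hY₁ : x₁ ∈ Y₁.val) (hY₂ : x₂ ∈ Y₂.val) (hY₃ : x₃ ∈ Y₃.val) :
    ((Mp X₁ X₂ X₃).val ∩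
      (φ (Mp (φ.symm Y₁) (φ.symm Y₂) (φ.symm Y₃))).val).Nonempty := by
  set Z₁ := φ.symm Y₁
  set Z₂ := φ.symm Y₂
  set Z₃ := φ.symm Y₃
  have hZ : ∀ (Y : {Y : Set V // IsRminusClass E Y}), Y.val = plusSet E (φ.symm Y).val := by
    intro Y
    have := hφ (φ.symm Y)
    rwa [Equiv.apply_symm_apply] at this
  have e₁ : ∃ z ∈ Z₁.val, ∃ x ∈ X₁.val, E z x := by
    have : x₁ ∈ plusSet E Z₁.val := (hZ Y₁) ▸ hY₁
    obtain ⟨z, hz, hzx⟩ := this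
    exact ⟨z, hz, x₁, hX₁, hzx⟩
  have e₂ : ∃ z ∈ Z₂.val, ∃ x ∈ X₂.val, E z x := by
    have : x₂ ∈ plusSet E Z₂.val := (hZ Y₂) ▸ hY₂
    obtain ⟨z, hz, hzx⟩ := this
    exact ⟨z, hz, x₂, hX₂, hzx⟩
  have e₃ : ∃ z ∈ Z₃.val, ∃ x ∈ X₃.val, E z x := by
    have : x₃ ∈ plusSet E Z₃.val := (hZ Y₃) ▸ hY₃
    obtain ⟨z, hz, hzx⟩ := this
    exact ⟨z, hz, x₃, hX₃, hzx⟩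
  obtain ⟨z, hz, x, hx, hzx⟩ := hMp.1 Z₁ X₁ Z₂ X₂ Z₃ X₃ e₁ e₂ e₃
  refine ⟨x, hx, ?_⟩
  rw [hφ]
  exact ⟨z, hz, hzx⟩
end
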